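/- arXiv:2506.21948 — 2 statements merged into one kernel-verified Lean document; each statement's English description precedes it below -/
import Mathlib

section
/- (Case 2 of the correctness of SHRINK.) Suppose s ∉ 𝒮(Δ), the shrinking set 𝒢 is nonempty and proper, v_i(s) = u for all i ∈ 𝒢, and v_i(s) > v_j(s) for all i ∈ 𝒢 and j ∉ 𝒢. Let p̂ ∉ 𝒢 attain the maximum of t_j over j ∉ 𝒢, and assume u²Δ_{p̂}² ≤ u²·‖s^{𝓘_{p̂}∖𝓘_𝒢}‖₂² + ‖s^{𝓘_{p̂}∩𝓘_𝒢}‖₂². Then t_* = t_{p̂} ≥ 1/u, and the output s_* satisfies v_i(s_*) = u·t_{p̂} for every i ∈ 𝒢 ∪ {p̂} and v_i(s_*) ≤ u·t_{p̂} for every i ∉ 𝒢 ∪ {p̂}. -/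
/-!
Scaling `s^{𝓘_𝒢}` by `t` turns `‖s^{𝓘_i}‖²` into `‖s^{𝓘_i∖𝓘_𝒢}‖² + t²‖s^{𝓘_i∩𝓘_𝒢}‖²`.
For `i ∈ 𝒢` this is `t²u²Δ_i²`. For `i ∉ 𝒢` the second argument of the max defining `t_i` is
exactly the `t` at which this quantity equals `(u t Δ_i)²`, and it is below `(u t Δ_i)²` for
every larger `t`; the case hypothesis says that this second argument wins the max for `p̂`.
Strict dominance of the ratios on `𝒢` keeps `u²Δ_i² − ‖s^{𝓘_i∩𝓘_𝒢}‖²` positive for `i ∉ 𝒢`.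
-/

noncomputable def proj {n : ℕ} (I : Finset (Fin n)) (x : EuclideanSpace ℝ (Fin n)) :
    EuclideanSpace ℝ (Fin n) :=
  WithLp.toLp 2 (fun j => if j ∈ I then x j else 0)

open Finset

section Projection

variable {n : ℕ} (A B : Finset (Fin n)) (x : EuclideanSpace ℝ (Fin n))

lemma norm_proj_sq : ‖proj A x‖ ^ 2 = ∑ j ∈ A, x j ^ 2 := by
  simp [EuclideanSpace.norm_sq_eq, proj, apply_ite, Finset.sum_ite_mem]

lemma norm_proj_add_smul_proj_sq (t : ℝ) :
    ‖proj A (x + (t - 1) • proj B x)‖ ^ 2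
      = ‖proj (A \ B) x‖ ^ 2 + t ^ 2 * ‖proj (A ∩ B) x‖ ^ 2 := by
  simp only [norm_proj_sq, mul_sum]
  rw [← sum_sdiff (inter_subset_left : A ∩ B ⊆ A), sdiff_inter_self_left]
  congr 1 <;> refine sum_congr rfl fun j hj => ?_
  · simp [proj, (mem_sdiff.1 hj).2]
  · simp only [proj, PiLp.add_apply, PiLp.smul_apply, (mem_inter.1 hj).2, ↓reduceIte,
      smul_eq_mul]
    ring

lemma norm_proj_sq_eq_sdiff_add_inter :
    ‖proj A x‖ ^ 2 = ‖proj (A \ B) x‖ ^ 2 + ‖proj (A ∩ B) x‖ ^ 2 := by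
  simpa using norm_proj_add_smul_proj_sq A B x 1

lemma norm_proj_add_smul_proj_of_subset (h : A ⊆ B) {t : ℝ} (ht : 0 ≤ t) :
    ‖proj A (x + (t - 1) • proj B x)‖ = t * ‖proj A x‖ := by
  rw [← sq_eq_sq₀ (norm_nonneg _) (by positivity), norm_proj_add_smul_proj_sq,
    sdiff_eq_empty_iff_subset.2 h, inter_eq_left.2 h, mul_pow]
  simp [norm_proj_sq]

end Projection

/-- The paper's `t_i` for an element `i ∉ 𝒢`, with `a = ‖s^{𝓘_i∖𝓘_𝒢}‖₂`
and `b = ‖s^{𝓘_i∩𝓘_𝒢}‖₂`. -/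
noncomputable def shrinkFactor (u Δ a b : ℝ) : ℝ :=
  max (1 / u) (a / √(u ^ 2 * Δ ^ 2 - b ^ 2))

section ShrinkFactor

variable {u Δ a b : ℝ}

lemma sq_add_sq_mul_le_of_shrinkFactor_le {t : ℝ} (ha : 0 ≤ a) (hb : b ^ 2 < u ^ 2 * Δ ^ 2)
    (ht : shrinkFactor u Δ a b ≤ t) : a ^ 2 + t ^ 2 * b ^ 2 ≤ (u * t * Δ) ^ 2 := by
  have hD : 0 < u ^ 2 * Δ ^ 2 - b ^ 2 := sub_pos.2 hb
  have hat : a ≤ t * √(u ^ 2 * Δ ^ 2 - b ^ 2) :=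
    (div_le_iff₀ (Real.sqrt_pos.2 hD)).1 ((le_max_right _ _).trans ht)
  have hat_sq : a ^ 2 ≤ t ^ 2 * (u ^ 2 * Δ ^ 2 - b ^ 2) := by
    simpa [mul_pow, Real.sq_sqrt hD.le] using pow_le_pow_left₀ ha hat 2
  linear_combination hat_sq

lemma shrinkFactor_eq_div (hu : 0 < u) (hb : b ^ 2 < u ^ 2 * Δ ^ 2)
    (hcase : u ^ 2 * Δ ^ 2 ≤ u ^ 2 * a ^ 2 + b ^ 2) (ha : 0 ≤ a) :
    shrinkFactor u Δ a b = a / √(u ^ 2 * Δ ^ 2 - b ^ 2) := by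
  refine max_eq_right ?_
  rw [div_le_div_iff₀ hu (Real.sqrt_pos.2 (sub_pos.2 hb)), one_mul,
    Real.sqrt_le_left (by positivity)]
  linear_combination hcase

lemma sq_add_sq_mul_shrinkFactor (hu : 0 < u) (hb : b ^ 2 < u ^ 2 * Δ ^ 2)
    (hcase : u ^ 2 * Δ ^ 2 ≤ u ^ 2 * a ^ 2 + b ^ 2) (ha : 0 ≤ a) :
    a ^ 2 + shrinkFactor u Δ a b ^ 2 * b ^ 2 = (u * shrinkFactor u Δ a b * Δ) ^ 2 := by
  have hD : 0 < u ^ 2 * Δ ^ 2 - b ^ 2 := sub_pos.2 hb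
  have ht : shrinkFactor u Δ a b ^ 2 * (u ^ 2 * Δ ^ 2 - b ^ 2) = a ^ 2 := by
    rw [shrinkFactor_eq_div hu hb hcase ha, div_pow, Real.sq_sqrt hD.le,
      div_mul_cancel₀ _ hD.ne']
  linear_combination -ht

end ShrinkFactor

section ShrinkStep

variable {n : ℕ} {A B : Finset (Fin n)} {x : EuclideanSpace ℝ (Fin n)} {u Δ : ℝ}

lemma norm_proj_inter_sq_lt (hA : ‖proj A x‖ < u * Δ) :
    ‖proj (A ∩ B) x‖ ^ 2 < u ^ 2 * Δ ^ 2 := by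
  have hsq : ‖proj A x‖ ^ 2 < (u * Δ) ^ 2 := pow_lt_pow_left₀ hA (norm_nonneg _) two_ne_zero
  linarith [norm_proj_sq_eq_sdiff_add_inter A B x, sq_nonneg ‖proj (A \ B) x‖]

lemma pos_of_norm_proj_lt (hΔ : 0 < Δ) (hA : ‖proj A x‖ < u * Δ) : 0 < u :=
  (pos_iff_pos_of_mul_pos ((norm_nonneg _).trans_lt hA)).2 hΔ

lemma norm_proj_shrink_div_of_subset (hAB : A ⊆ B) (hA : ‖proj A x‖ / Δ = u) {t : ℝ}
    (ht : 0 ≤ t) : ‖proj A (x + (t - 1) • proj B x)‖ / Δ = u * t := by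
  rw [norm_proj_add_smul_proj_of_subset A B x hAB ht, mul_div_assoc, hA, mul_comm]

lemma norm_proj_shrink_div_le (hΔ : 0 < Δ) (hA : ‖proj A x‖ < u * Δ) {t : ℝ}
    (ht : shrinkFactor u Δ ‖proj (A \ B) x‖ ‖proj (A ∩ B) x‖ ≤ t) :
    ‖proj A (x + (t - 1) • proj B x)‖ / Δ ≤ u * t := by
  have hu := pos_of_norm_proj_lt hΔ hA
  have ht₀ : 0 ≤ t := (one_div_pos.2 hu).le.trans ((le_max_left _ _).trans ht)
  rw [div_le_iff₀ hΔ, ← sq_le_sq₀ (norm_nonneg _) (by positivity),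
    norm_proj_add_smul_proj_sq]
  exact sq_add_sq_mul_le_of_shrinkFactor_le (norm_nonneg _) (norm_proj_inter_sq_lt hA) ht

lemma norm_proj_shrink_div_eq (hΔ : 0 < Δ) (hA : ‖proj A x‖ < u * Δ)
    (hcase : u ^ 2 * Δ ^ 2 ≤ u ^ 2 * ‖proj (A \ B) x‖ ^ 2 + ‖proj (A ∩ B) x‖ ^ 2) :
    ‖proj A (x + (shrinkFactor u Δ ‖proj (A \ B) x‖ ‖proj (A ∩ B) x‖ - 1) • proj B x)‖
        / Δ
      = u * shrinkFactor u Δ ‖proj (A \ B) x‖ ‖proj (A ∩ B) x‖ := by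
  have hu := pos_of_norm_proj_lt hΔ hA
  have ht₀ : 0 < shrinkFactor u Δ ‖proj (A \ B) x‖ ‖proj (A ∩ B) x‖ :=
    (one_div_pos.2 hu).trans_le (le_max_left _ _)
  rw [div_eq_iff hΔ.ne', ← sq_eq_sq₀ (norm_nonneg _) (by positivity),
    norm_proj_add_smul_proj_sq]
  exact sq_add_sq_mul_shrinkFactor hu (norm_proj_inter_sq_lt hA) hcase (norm_nonneg _)

end ShrinkStep

theorem shrink_case_two_general {n q : ℕ} (I : Fin q → Finset (Fin n)) (Δ : Fin q → ℝ)
    (hΔ : ∀ i, 0 < Δ i) (s : EuclideanSpace ℝ (Fin n)) (u : ℝ)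
    (𝒢 : Finset (Fin q)) (h𝒢ne : 𝒢.Nonempty)
    (hvG : ∀ i ∈ 𝒢, ‖proj (I i) s‖ / Δ i = u)
    (hvlt : ∀ i ∈ 𝒢, ∀ j ∉ 𝒢, ‖proj (I j) s‖ / Δ j < ‖proj (I i) s‖ / Δ i)
    (IG : Finset (Fin n)) (hIG : IG = 𝒢.biUnion I)
    (tf : Fin q → ℝ)
    (htf : ∀ i, tf i = if i ∈ 𝒢 then 1 / u
      else max (1 / u)
        (‖proj (I i \ IG) s‖ / Real.sqrt (u ^ 2 * Δ i ^ 2 - ‖proj (I i ∩ IG) s‖ ^ 2)))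
    (phat : Fin q) (hphat : phat ∉ 𝒢)
    (hphatmax : ∀ j ∉ 𝒢, tf j ≤ tf phat)
    (hcase : u ^ 2 * Δ phat ^ 2
      ≤ u ^ 2 * ‖proj (I phat \ IG) s‖ ^ 2 + ‖proj (I phat ∩ IG) s‖ ^ 2)
    (tstar : ℝ)
    (htstar : tstar = Finset.univ.sup' (Finset.univ_nonempty_iff.mpr ⟨phat⟩) tf)
    (sstar : EuclideanSpace ℝ (Fin n))
    (hsstar : sstar = s + (tstar - 1) • proj IG s) :
    tstar = tf phat ∧ 1 / u ≤ tf phat ∧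
    (∀ i ∈ insert phat 𝒢, ‖proj (I i) sstar‖ / Δ i = u * tf phat) ∧
    (∀ i ∉ insert phat 𝒢, ‖proj (I i) sstar‖ / Δ i ≤ u * tf phat) := by
  obtain ⟨g, hg⟩ := h𝒢ne
  subst hIG hsstar
  have hlt : ∀ j ∉ 𝒢, ‖proj (I j) s‖ < u * Δ j := fun j hj => by
    simpa [hvG g hg, div_lt_iff₀ (hΔ j)] using hvlt g hg j hj
  have hu := pos_of_norm_proj_lt (hΔ phat) (hlt phat hphat)
  have htp : tf phat = shrinkFactor u (Δ phat) ‖proj (I phat \ 𝒢.biUnion I) s‖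
      ‖proj (I phat ∩ 𝒢.biUnion I) s‖ := by
    rw [htf, if_neg hphat]
    rfl
  have hge : 1 / u ≤ tf phat := htp ▸ le_max_left _ _
  have htstar' : tstar = tf phat := by
    refine htstar ▸ le_antisymm (sup'_le _ _ fun i _ => ?_) (le_sup' tf (mem_univ phat))
    by_cases hi : i ∈ 𝒢
    · exact (htf i).trans (if_pos hi) ▸ hge
    · exact hphatmax i hi
  rw [htstar']
  refine ⟨rfl, hge, fun i hi => ?_, fun i hi => ?_⟩
  · rcases mem_insert.1 hi with rfl | hi
    · rw [htp]
      exact norm_proj_shrink_div_eq (hΔ i) (hlt i hphat) hcase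
    · exact norm_proj_shrink_div_of_subset (subset_biUnion_of_mem I hi) (hvG i hi)
        ((one_div_pos.2 hu).le.trans hge)
  · have hi𝒢 : i ∉ 𝒢 := fun h => hi (mem_insert_of_mem h)
    have hti := hphatmax i hi𝒢
    rw [htf i, if_neg hi𝒢] at hti
    exact norm_proj_shrink_div_le (hΔ i) (hlt i hi𝒢) hti

/-- Case 2 of the correctness of the SHRINK subroutine: if
`u²Δ_p̂² ≤ u²‖s^{I_p̂∖I_G}‖² + ‖s^{I_p̂∩I_G}‖²` for a maximizer `p̂ ∉ 𝒢` of the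
elemental ratios, then `t_* = t_p̂ ≥ 1/u` and the output `s_*` satisfies
`v_i(s_*) = u·t_p̂` on `𝒢 ∪ {p̂}` and `v_i(s_*) ≤ u·t_p̂` elsewhere. -/
theorem shrink_case_two {n q : ℕ} (I : Fin q → Finset (Fin n)) (Δ : Fin q → ℝ)
    (hΔ : ∀ i, 0 < Δ i) (s : EuclideanSpace ℝ (Fin n)) (u : ℝ)
    (𝒢 : Finset (Fin q)) (h𝒢ne : 𝒢.Nonempty) (h𝒢pr : 𝒢 ≠ Finset.univ)
    (hsout : ¬ (∀ i, ‖proj (I i) s‖ ≤ Δ i))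
    (hvG : ∀ i ∈ 𝒢, ‖proj (I i) s‖ / Δ i = u)
    (hvlt : ∀ i ∈ 𝒢, ∀ j ∉ 𝒢, ‖proj (I j) s‖ / Δ j < ‖proj (I i) s‖ / Δ i)
    (IG : Finset (Fin n)) (hIG : IG = 𝒢.biUnion I)
    (tf : Fin q → ℝ)
    (htf : ∀ i, tf i = if i ∈ 𝒢 then 1 / u
      else max (1 / u)
        (‖proj (I i \ IG) s‖ / Real.sqrt (u ^ 2 * Δ i ^ 2 - ‖proj (I i ∩ IG) s‖ ^ 2)))
    (phat : Fin q) (hphat : phat ∉ 𝒢)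
    (hphatmax : ∀ j ∉ 𝒢, tf j ≤ tf phat)
    (hcase : u ^ 2 * Δ phat ^ 2
      ≤ u ^ 2 * ‖proj (I phat \ IG) s‖ ^ 2 + ‖proj (I phat ∩ IG) s‖ ^ 2)
    (tstar : ℝ)
    (htstar : tstar = Finset.univ.sup' (Finset.univ_nonempty_iff.mpr ⟨phat⟩) tf)
    (sstar : EuclideanSpace ℝ (Fin n))
    (hsstar : sstar = s + (tstar - 1) • proj IG s) :
    tstar = tf phat ∧ 1 / u ≤ tf phat ∧
    (∀ i ∈ insert phat 𝒢, ‖proj (I i) sstar‖ / Δ i = u * tf phat) ∧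
    (∀ i ∉ insert phat 𝒢, ‖proj (I i) sstar‖ / Δ i ≤ u * tf phat) :=
  shrink_case_two_general I Δ hΔ s u 𝒢 h𝒢ne hvG hvlt IG hIG tf htf phat hphat hphatmax hcase tstar
    htstar sstar hsstar
end

section
/- (Strict growth of the shrinking set.) Suppose s ∉ 𝒮(Δ), the shrinking set 𝒢 is nonempty and proper, v_i(s) = u for all i ∈ 𝒢, and v_i(s) > v_j(s) for all i ∈ 𝒢 and j ∉ 𝒢. If the output s_* still satisfies s_* ∉ 𝒮(Δ), then there exists p̂ ∉ 𝒢 such that 𝒢 ∪ {p̂} ⊆ {i ∈ {1,…,q} : v_i(s_*) = max_{1≤j≤q} v_j(s_*)}; in particular, the set of indices attaining the maximal violation ratio at s_* strictly contains 𝒢. -/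
noncomputable def shrink {n : ℕ} (K : Finset (Fin n)) (t : ℝ) (x : EuclideanSpace ℝ (Fin n)) :
    EuclideanSpace ℝ (Fin n) :=
  x + (t - 1) • proj K x

section Proj

variable {n : ℕ}

lemma proj_apply (J : Finset (Fin n)) (x : EuclideanSpace ℝ (Fin n)) (k : Fin n) :
    proj J x k = if k ∈ J then x k else 0 :=
  rfl

lemma norm_proj_sq_s10 (J : Finset (Fin n)) (x : EuclideanSpace ℝ (Fin n)) :
    ‖proj J x‖ ^ 2 = ∑ k ∈ J, x k ^ 2 := by
  rw [EuclideanSpace.norm_sq_eq, ← Finset.sum_subset (Finset.subset_univ J)]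
  · exact Finset.sum_congr rfl fun k hk => by simp [proj_apply, hk]
  · intro k _ hk
    simp [proj_apply, hk]

lemma shrink_apply (K : Finset (Fin n)) (t : ℝ) (x : EuclideanSpace ℝ (Fin n)) (k : Fin n) :
    shrink K t x k = if k ∈ K then t * x k else x k := by
  change x k + (t - 1) * proj K x k = _
  rw [proj_apply]
  split_ifs <;> ring

lemma proj_shrink_of_subset {J K : Finset (Fin n)} (h : J ⊆ K) (t : ℝ)
    (x : EuclideanSpace ℝ (Fin n)) : proj J (shrink K t x) = t • proj J x := by
  ext k
  change proj J (shrink K t x) k = t * proj J x k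
  rw [proj_apply, proj_apply, shrink_apply]
  by_cases hk : k ∈ J
  · simp [hk, h hk]
  · simp [hk]

lemma norm_proj_shrink_sq (J K : Finset (Fin n)) (t : ℝ) (x : EuclideanSpace ℝ (Fin n)) :
    ‖proj J (shrink K t x)‖ ^ 2 = t ^ 2 * ‖proj (J ∩ K) x‖ ^ 2 + ‖proj (J \ K) x‖ ^ 2 := by
  rw [norm_proj_sq_s10, norm_proj_sq_s10, norm_proj_sq_s10, Finset.mul_sum,
    ← Finset.sum_inter_add_sum_sdiff J K]
  congr 1
  · refine Finset.sum_congr rfl fun k hk => ?_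
    rw [shrink_apply, if_pos (Finset.mem_inter.1 hk).2]
    ring
  · refine Finset.sum_congr rfl fun k hk => ?_
    rw [shrink_apply, if_neg (Finset.mem_sdiff.1 hk).2]

lemma norm_proj_sq_eq_inter_add_sdiff (J K : Finset (Fin n)) (x : EuclideanSpace ℝ (Fin n)) :
    ‖proj J x‖ ^ 2 = ‖proj (J ∩ K) x‖ ^ 2 + ‖proj (J \ K) x‖ ^ 2 := by
  simpa [shrink] using norm_proj_shrink_sq J K 1 x

end Proj

section Scalar

variable {a b R t : ℝ}

lemma div_sqrt_sq_sub_sq_le_iff (hb : 0 ≤ b) (ht : 0 ≤ t) (h : a ^ 2 + b ^ 2 < R ^ 2) :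
    b / √(R ^ 2 - a ^ 2) ≤ t ↔ t ^ 2 * a ^ 2 + b ^ 2 ≤ (t * R) ^ 2 := by
  have hD : 0 < R ^ 2 - a ^ 2 := by nlinarith
  rw [div_le_iff₀ (Real.sqrt_pos.2 hD), ← sq_le_sq₀ hb (by positivity), mul_pow,
    Real.sq_sqrt hD.le]
  rw [mul_sub, mul_pow]
  constructor <;> intro <;> linarith

lemma div_sqrt_sq_sub_sq_eq_iff (hb : 0 ≤ b) (ht : 0 ≤ t) (h : a ^ 2 + b ^ 2 < R ^ 2) :
    b / √(R ^ 2 - a ^ 2) = t ↔ t ^ 2 * a ^ 2 + b ^ 2 = (t * R) ^ 2 := by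
  have hD : 0 < R ^ 2 - a ^ 2 := by nlinarith
  rw [div_eq_iff (Real.sqrt_pos.2 hD).ne', ← sq_eq_sq₀ hb (by positivity), mul_pow,
    Real.sq_sqrt hD.le]
  rw [mul_sub, mul_pow]
  constructor <;> intro <;> linarith

end Scalar

section Violation

variable {n : ℕ} {J K : Finset (Fin n)} {x : EuclideanSpace ℝ (Fin n)} {Δ u t : ℝ}

lemma norm_proj_shrink_div_of_subset_s10 (h : J ⊆ K) (ht : 0 ≤ t) (hv : ‖proj J x‖ / Δ = u) :
    ‖proj J (shrink K t x)‖ / Δ = t * u := by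
  rw [proj_shrink_of_subset h, norm_smul, Real.norm_of_nonneg ht, mul_div_assoc, hv]

lemma sq_norm_proj_lt_of_div_lt (hΔ : 0 < Δ) (hv : ‖proj J x‖ / Δ < u) :
    ‖proj (J ∩ K) x‖ ^ 2 + ‖proj (J \ K) x‖ ^ 2 < (u * Δ) ^ 2 := by
  rw [← norm_proj_sq_eq_inter_add_sdiff]
  exact pow_lt_pow_left₀ ((div_lt_iff₀ hΔ).1 hv) (norm_nonneg _) two_ne_zero

lemma norm_proj_shrink_div_le_iff (hΔ : 0 < Δ) (ht : 0 ≤ t) (hv : ‖proj J x‖ / Δ < u) :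
    ‖proj J (shrink K t x)‖ / Δ ≤ t * u ↔
      ‖proj (J \ K) x‖ / √(u ^ 2 * Δ ^ 2 - ‖proj (J ∩ K) x‖ ^ 2) ≤ t := by
  have hu : 0 ≤ u := (div_nonneg (norm_nonneg _) hΔ.le).trans hv.le
  rw [← mul_pow, div_sqrt_sq_sub_sq_le_iff (norm_nonneg _) ht (sq_norm_proj_lt_of_div_lt hΔ hv),
    ← norm_proj_shrink_sq, div_le_iff₀ hΔ, ← mul_assoc,
    sq_le_sq₀ (norm_nonneg _) (by positivity)]

lemma norm_proj_shrink_div_eq_iff (hΔ : 0 < Δ) (ht : 0 ≤ t) (hv : ‖proj J x‖ / Δ < u) :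
    ‖proj J (shrink K t x)‖ / Δ = t * u ↔
      ‖proj (J \ K) x‖ / √(u ^ 2 * Δ ^ 2 - ‖proj (J ∩ K) x‖ ^ 2) = t := by
  have hu : 0 ≤ u := (div_nonneg (norm_nonneg _) hΔ.le).trans hv.le
  rw [← mul_pow, div_sqrt_sq_sub_sq_eq_iff (norm_nonneg _) ht (sq_norm_proj_lt_of_div_lt hΔ hv),
    ← norm_proj_shrink_sq, div_eq_iff hΔ.ne', ← mul_assoc,
    sq_eq_sq₀ (norm_nonneg _) (by positivity)]

end Violation

section Order

variable {ι α : Type*}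

lemma Finset.sup'_eq_of_forall_le_of_eq [SemilatticeSup α] {s : Finset ι} (H : s.Nonempty)
    {f : ι → α} {c : α} (hle : ∀ j ∈ s, f j ≤ c) {i : ι} (hi : i ∈ s) (hfi : f i = c) :
    s.sup' H f = c :=
  le_antisymm (Finset.sup'_le H f hle) (Finset.le_sup'_of_le f hi hfi.ge)

lemma Finset.exists_notMem_eq_sup'_of_lt [DecidableEq ι] [LinearOrder α] {s G : Finset ι}
    (H : s.Nonempty) {c : α} {w tf : ι → α} (htf : ∀ i, tf i = if i ∈ G then c else max c (w i))
    (hc : c < s.sup' H tf) : ∃ p ∈ s, p ∉ G ∧ w p = s.sup' H tf := by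
  obtain ⟨p, hps, hp⟩ := Finset.exists_mem_eq_sup' H tf
  rw [hp, htf] at hc ⊢
  by_cases hpG : p ∈ G
  · rw [if_pos hpG] at hc
    exact absurd hc (lt_irrefl c)
  · rw [if_neg hpG] at hc ⊢
    exact ⟨p, hps, hpG, (max_eq_right (lt_max_iff.1 hc |>.resolve_left (lt_irrefl c)).le).symm⟩

end Order

theorem shrink_set_grows_general {n q : ℕ} (I : Fin q → Finset (Fin n)) (Δ : Fin q → ℝ)
    (hΔ : ∀ i, 0 < Δ i) (s : EuclideanSpace ℝ (Fin n)) (u : ℝ)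
    (𝒢 : Finset (Fin q)) (h𝒢ne : 𝒢.Nonempty)
    (hvG : ∀ i ∈ 𝒢, ‖proj (I i) s‖ / Δ i = u)
    (hvlt : ∀ i ∈ 𝒢, ∀ j ∉ 𝒢, ‖proj (I j) s‖ / Δ j < ‖proj (I i) s‖ / Δ i)
    (IG : Finset (Fin n)) (hIG : IG = 𝒢.biUnion I)
    (tf : Fin q → ℝ)
    (htf : ∀ i, tf i = if i ∈ 𝒢 then 1 / u
      else max (1 / u)
        (‖proj (I i \ IG) s‖ / Real.sqrt (u ^ 2 * Δ i ^ 2 - ‖proj (I i ∩ IG) s‖ ^ 2)))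
    (tstar : ℝ)
    (htstar : tstar = Finset.univ.sup' (h𝒢ne.mono (Finset.subset_univ 𝒢)) tf)
    (sstar : EuclideanSpace ℝ (Fin n))
    (hsstar : sstar = s + (tstar - 1) • proj IG s)
    (hstarout : ¬ (∀ i, ‖proj (I i) sstar‖ ≤ Δ i)) :
    ∃ phat, phat ∉ 𝒢 ∧
      (∀ i ∈ insert phat 𝒢, ‖proj (I i) sstar‖ / Δ i
        = Finset.univ.sup' (h𝒢ne.mono (Finset.subset_univ 𝒢))
            (fun j => ‖proj (I j) sstar‖ / Δ j)) ∧
      (↑𝒢 : Set (Fin q)) ⊂ {i | ‖proj (I i) sstar‖ / Δ i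
        = Finset.univ.sup' (h𝒢ne.mono (Finset.subset_univ 𝒢))
            (fun j => ‖proj (I j) sstar‖ / Δ j)} := by
  obtain ⟨g, hg⟩ := id h𝒢ne
  replace hsstar : sstar = shrink IG tstar s := hsstar
  subst hsstar htstar
  set t := Finset.univ.sup' (h𝒢ne.mono (Finset.subset_univ 𝒢)) tf
  have htf_le (j : Fin q) : tf j ≤ t := Finset.le_sup' tf (Finset.mem_univ j)
  have ht : 0 ≤ t := by
    have h := htf_le g
    rw [htf, if_pos hg, ← hvG g hg] at h
    exact (one_div_nonneg.2 (div_nonneg (norm_nonneg _) (hΔ g).le)).trans h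
  have hlt (j : Fin q) (hj : j ∉ 𝒢) : ‖proj (I j) s‖ / Δ j < u := hvG g hg ▸ hvlt g hg j hj
  have hmem (i : Fin q) (hi : i ∈ 𝒢) : ‖proj (I i) (shrink IG t s)‖ / Δ i = t * u :=
    norm_proj_shrink_div_of_subset_s10 (hIG ▸ Finset.subset_biUnion_of_mem I hi) ht (hvG i hi)
  have hle (j : Fin q) : ‖proj (I j) (shrink IG t s)‖ / Δ j ≤ t * u := by
    by_cases hj : j ∈ 𝒢
    · exact (hmem j hj).le
    · have h := htf_le j
      rw [htf, if_neg hj, max_le_iff] at h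
      exact (norm_proj_shrink_div_le_iff (hΔ j) ht (hlt j hj)).2 h.2
  have htu : 1 < t * u := by
    obtain ⟨j, hj⟩ := not_forall.1 hstarout
    exact ((one_lt_div (hΔ j)).2 (not_le.1 hj)).trans_le (hle j)
  have hinv : 1 / u < t := (div_lt_iff₀ (pos_of_mul_pos_right (one_pos.trans htu) ht)).2 htu
  obtain ⟨p, -, hpG, hp⟩ := Finset.exists_notMem_eq_sup'_of_lt _ htf hinv
  have hmax (i : Fin q) (hi : i ∈ insert p 𝒢) : ‖proj (I i) (shrink IG t s)‖ / Δ i = t * u := by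
    rcases Finset.mem_insert.1 hi with rfl | hi
    exacts [(norm_proj_shrink_div_eq_iff (hΔ i) ht (hlt i hpG)).2 hp, hmem i hi]
  rw [Finset.sup'_eq_of_forall_le_of_eq _ (fun j _ => hle j) (Finset.mem_univ g) (hmem g hg)]
  exact ⟨p, hpG, hmax, (Finset.coe_ssubset.2 (Finset.ssubset_insert hpG)).trans_subset hmax⟩

/-- Strict growth of the shrinking set: if the output `s_*` of SHRINK is still
outside the structured trust region, then `𝒢 ∪ {p̂}` is contained in the set of
indices attaining the maximal violation ratio at `s_*`, for some `p̂ ∉ 𝒢`; in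
particular that set strictly contains `𝒢`. -/
theorem shrink_set_grows {n q : ℕ} (I : Fin q → Finset (Fin n)) (Δ : Fin q → ℝ)
    (hΔ : ∀ i, 0 < Δ i) (s : EuclideanSpace ℝ (Fin n)) (u : ℝ)
    (𝒢 : Finset (Fin q)) (h𝒢ne : 𝒢.Nonempty) (h𝒢pr : 𝒢 ≠ Finset.univ)
    (hsout : ¬ (∀ i, ‖proj (I i) s‖ ≤ Δ i))
    (hvG : ∀ i ∈ 𝒢, ‖proj (I i) s‖ / Δ i = u)
    (hvlt : ∀ i ∈ 𝒢, ∀ j ∉ 𝒢, ‖proj (I j) s‖ / Δ j < ‖proj (I i) s‖ / Δ i)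
    (IG : Finset (Fin n)) (hIG : IG = 𝒢.biUnion I)
    (tf : Fin q → ℝ)
    (htf : ∀ i, tf i = if i ∈ 𝒢 then 1 / u
      else max (1 / u)
        (‖proj (I i \ IG) s‖ / Real.sqrt (u ^ 2 * Δ i ^ 2 - ‖proj (I i ∩ IG) s‖ ^ 2)))
    (tstar : ℝ)
    (htstar : tstar = Finset.univ.sup' (h𝒢ne.mono (Finset.subset_univ 𝒢)) tf)
    (sstar : EuclideanSpace ℝ (Fin n))
    (hsstar : sstar = s + (tstar - 1) • proj IG s)
    (hstarout : ¬ (∀ i, ‖proj (I i) sstar‖ ≤ Δ i)) :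
    ∃ phat, phat ∉ 𝒢 ∧
      (∀ i ∈ insert phat 𝒢, ‖proj (I i) sstar‖ / Δ i
        = Finset.univ.sup' (h𝒢ne.mono (Finset.subset_univ 𝒢))
            (fun j => ‖proj (I j) sstar‖ / Δ j)) ∧
      (↑𝒢 : Set (Fin q)) ⊂ {i | ‖proj (I i) sstar‖ / Δ i
        = Finset.univ.sup' (h𝒢ne.mono (Finset.subset_univ 𝒢))
            (fun j => ‖proj (I j) sstar‖ / Δ j)} :=
  shrink_set_grows_general I Δ hΔ s u 𝒢 h𝒢ne hvG hvlt IG hIG tf htf tstar htstar sstar hsstar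
    hstarout
end
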